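/- arXiv:2312.06895 — 2 statements merged into one kernel-verified Lean document; each statement's English description precedes it below -/
import Mathlib

section
/- For every forest F and every integer t ≥ 2: every graph G that is K_t-Ramsey contains at least as many (unlabeled) copies of F as the complete graph on r(K_t) vertices does. In other words, the complete graph K_{r(K_t)} minimizes the number of copies of F among all K_t-Ramsey graphs, so r_F(K_t) equals the number of copies of F in K_{r(K_t)}. -/
/-- A graph `G` is `K_t`-Ramsey: every 2-coloring of the edges contains a monochromatic
copy of `K_t`. -/
def IsRamsey {V : Type*} (t : ℕ) (G : SimpleGraph V) : Prop :=
  ∀ c : Sym2 V → Bool, ∃ (S : Finset V) (b : Bool), S.card = t ∧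
    ∀ u ∈ S, ∀ v ∈ S, u ≠ v → G.Adj u v ∧ c s(u, v) = b

/-- The Ramsey number `r(K_t)`. -/
noncomputable def ramseyNumber (t : ℕ) : ℕ :=
  sInf {n : ℕ | IsRamsey t (⊤ : SimpleGraph (Fin n))}

/-- The number of (unlabeled) copies of `F` in `G`: the number of subgraphs of `G`
isomorphic to `F`. -/
noncomputable def copyCount {α V : Type*} (F : SimpleGraph α) (G : SimpleGraph V) : ℕ :=
  Nat.card {H : G.Subgraph // Nonempty (H.coe ≃g F)}

/-!
The Erdős–Szekeres bound `r(K_t) ≤ (2t choose t)` makes `r(K_t)` finite. A proper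
`m`-colouring of `G` is a homomorphism `G →g K_m`, and 2-colourings of `K_m` pull back along it;
hence a `K_t`-Ramsey graph is not `(r - 1)`-colourable, where `r = r(K_t)`. A graph that
is not `(r - 1)`-colourable contains an induced subgraph of minimum degree at least `r - 1`
(otherwise greedy colouring along repeatedly removed low-degree vertices succeeds). Into such a
graph a forest `F` on `k` vertices embeds greedily leaf by leaf, with at least `r - i` choices for
the image of the `(i + 1)`-st vertex, so there are at least `r (r - 1) ⋯ (r - k + 1)` labelled
copies of `F`: exactly as many as in `K_r`. Labelled copies are unlabelled copies times `|Aut F|`.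
-/

open Finset

section Ramsey

variable {V : Type*} [DecidableEq V] {c : Sym2 V → Bool} {A : Finset V} {v : V}

def colorNeighborhood (c : Sym2 V → Bool) (A : Finset V) (v : V) (b : Bool) : Finset V :=
  {u ∈ A.erase v | c s(v, u) = b}

theorem colorNeighborhood_subset_erase (b : Bool) : colorNeighborhood c A v b ⊆ A.erase v :=
  filter_subset _ _

theorem card_colorNeighborhood_add_card_colorNeighborhood (hv : v ∈ A) :
    #(colorNeighborhood c A v true) + #(colorNeighborhood c A v false) + 1 = #A := by
  rw [← card_erase_add_one hv,
    ← card_filter_add_card_filter_not (s := A.erase v) (fun u ↦ c s(v, u) = true)]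
  simp only [colorNeighborhood, Bool.not_eq_true]

theorem insert_of_subset_colorNeighborhood {b : Bool} {S : Finset V} (hv : v ∈ A)
    (hSA : S ⊆ colorNeighborhood c A v b) (hS : (S : Set V).Pairwise fun u w ↦ c s(u, w) = b) :
    insert v S ⊆ A ∧ #(insert v S) = #S + 1 ∧
      ((insert v S : Finset V) : Set V).Pairwise fun u w ↦ c s(u, w) = b := by
  have hS' : S ⊆ A.erase v := hSA.trans (colorNeighborhood_subset_erase b)
  have hvu : ∀ u ∈ S, c s(v, u) = b := fun u hu ↦ (mem_filter.1 (hSA hu)).2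
  refine ⟨insert_subset hv (hS'.trans (erase_subset _ _)),
    card_insert_of_notMem fun hvS ↦ (mem_erase.1 (hS' hvS)).1 rfl, ?_⟩
  rw [coe_insert, Set.pairwise_insert]
  exact ⟨hS, fun u hu _ ↦ ⟨hvu u hu, by rw [Sym2.eq_swap]; exact hvu u hu⟩⟩

theorem exists_monochromatic_of_choose_le (c : Sym2 V → Bool) (s t : ℕ) (A : Finset V)
    (hA : (s + t).choose s ≤ #A) :
    ∃ S ⊆ A, (#S = s ∧ (S : Set V).Pairwise (fun u v ↦ c s(u, v) = true)) ∨
      (#S = t ∧ (S : Set V).Pairwise (fun u v ↦ c s(u, v) = false)) := by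
  induction s generalizing t A with
  | zero => exact ⟨∅, by simp⟩
  | succ s ihs =>
    induction t generalizing A with
    | zero => exact ⟨∅, by simp⟩
    | succ t iht =>
      obtain ⟨v, hv⟩ : A.Nonempty := card_pos.1 ((Nat.choose_pos (by omega)).trans_le hA)
      have hpascal : (s + 1 + (t + 1)).choose (s + 1) =
          (s + (t + 1)).choose s + (s + 1 + t).choose (s + 1) := by
        rw [show s + 1 + (t + 1) = s + t + 1 + 1 by omega, Nat.choose_succ_succ,
          show s + (t + 1) = s + t + 1 by omega, show s + 1 + t = s + t + 1 by omega]
      have hsub (b : Bool) : colorNeighborhood c A v b ⊆ A :=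
        (colorNeighborhood_subset_erase b).trans (erase_subset _ _)
      have := card_colorNeighborhood_add_card_colorNeighborhood (c := c) hv
      rcases (by omega : (s + (t + 1)).choose s ≤ #(colorNeighborhood c A v true) ∨
          (s + 1 + t).choose (s + 1) ≤ #(colorNeighborhood c A v false)) with hR | hB
      · obtain ⟨S, hSR, ⟨hS, hred⟩ | hblue⟩ := ihs (t + 1) _ hR
        · obtain ⟨hSA, hcard, hred'⟩ := insert_of_subset_colorNeighborhood hv hSR hred
          exact ⟨insert v S, hSA, Or.inl ⟨hcard.trans (by rw [hS]), hred'⟩⟩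
        · exact ⟨S, hSR.trans (hsub true), Or.inr hblue⟩
      · obtain ⟨S, hSB, hred | ⟨hS, hblue⟩⟩ := iht _ hB
        · exact ⟨S, hSB.trans (hsub false), Or.inl hred⟩
        · obtain ⟨hSA, hcard, hblue'⟩ := insert_of_subset_colorNeighborhood hv hSB hblue
          exact ⟨insert v S, hSA, Or.inr ⟨hcard.trans (by rw [hS]), hblue'⟩⟩

end Ramsey

section RamseyNumber

variable {V W : Type*} {t : ℕ} {G : SimpleGraph V}

theorem exists_isRamsey_top (t : ℕ) : ∃ n, IsRamsey t (⊤ : SimpleGraph (Fin n)) := by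
  refine ⟨(t + t).choose t, fun c ↦ ?_⟩
  obtain ⟨S, -, ⟨hS, h⟩ | ⟨hS, h⟩⟩ := exists_monochromatic_of_choose_le c t t univ (by simp)
  exacts [⟨S, true, hS, fun u hu v hv huv ↦ ⟨huv, h hu hv huv⟩⟩,
    ⟨S, false, hS, fun u hu v hv huv ↦ ⟨huv, h hu hv huv⟩⟩]

theorem isRamsey_ramseyNumber (t : ℕ) : IsRamsey t (⊤ : SimpleGraph (Fin (ramseyNumber t))) :=
  Nat.sInf_mem (exists_isRamsey_top t)

theorem IsRamsey.le_card [Fintype V] (h : IsRamsey t G) : t ≤ Fintype.card V := by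
  obtain ⟨S, -, rfl, -⟩ := h (fun _ ↦ true)
  exact card_le_univ S

theorem le_ramseyNumber (t : ℕ) : t ≤ ramseyNumber t := by
  simpa using (isRamsey_ramseyNumber t).le_card

theorem IsRamsey.map {H : SimpleGraph W} (h : IsRamsey t G) (f : G →g H) : IsRamsey t H := by
  classical
  intro c
  obtain ⟨S, b, hS, hmono⟩ := h (fun e ↦ c (e.map f))
  have hinj : Set.InjOn f S := fun u hu v hv huv ↦ by
    by_contra hne
    exact (f.map_adj (hmono u hu v hv hne).1).ne huv
  refine ⟨S.image f, b, by rw [card_image_of_injOn hinj, hS], ?_⟩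
  simp only [mem_image]
  rintro _ ⟨u, hu, rfl⟩ _ ⟨v, hv, rfl⟩ huv
  have huv' : u ≠ v := fun h ↦ huv (congrArg f h)
  exact ⟨f.map_adj (hmono u hu v hv huv').1, (hmono u hu v hv huv').2⟩

theorem IsRamsey.ramseyNumber_le_of_colorable {m : ℕ} (h : IsRamsey t G) (hc : G.Colorable m) :
    ramseyNumber t ≤ m :=
  Nat.sInf_le (h.map hc.some)

end RamseyNumber

namespace SimpleGraph

section Degeneracy

variable {V : Type*} [Fintype V] [DecidableEq V] {G : SimpleGraph V} [DecidableRel G.Adj] {m : ℕ}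

theorem colorable_of_forall_exists_card_neighborFinset_inter_lt
    (h : ∀ W : Finset V, W.Nonempty → ∃ v ∈ W, #(G.neighborFinset v ∩ W) < m) :
    G.Colorable m := by
  suffices ∀ W : Finset V, ∃ φ : V → Fin m, ∀ u ∈ W, ∀ w ∈ W, G.Adj u w → φ u ≠ φ w by
    obtain ⟨φ, hφ⟩ := this univ
    exact ⟨Coloring.mk φ fun {u w} huw ↦ hφ u (mem_univ u) w (mem_univ w) huw⟩
  intro W
  induction W using Finset.strongInduction with
  | H W ih =>
  rcases W.eq_empty_or_nonempty with rfl | hW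
  · rcases isEmpty_or_nonempty V with hV | ⟨⟨v⟩⟩
    · exact ⟨isEmptyElim, by simp⟩
    · obtain ⟨u, -, hm⟩ := h univ ⟨v, mem_univ v⟩
      exact ⟨fun _ ↦ ⟨0, by omega⟩, by simp⟩
  obtain ⟨v, hv, hdeg⟩ := h W hW
  obtain ⟨φ, hφ⟩ := ih (W.erase v) (erase_ssubset hv)
  obtain ⟨c, -, hc⟩ := exists_mem_notMem_of_card_lt_card
    (s := (G.neighborFinset v ∩ W).image φ) (t := univ)
    (by simpa using card_image_le.trans_lt hdeg)
  have hfar : ∀ u ∈ W, G.Adj v u → Function.update φ v c u ≠ c := fun u hu hvu ↦ by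
    rw [Function.update_of_ne hvu.ne']
    exact fun hcu ↦ hc (mem_image.2 ⟨u, by simp [hu, hvu], hcu⟩)
  refine ⟨Function.update φ v c, fun u hu w hw huw ↦ ?_⟩
  rcases eq_or_ne u v with rfl | hu'
  · simpa [eq_comm] using hfar w hw huw
  rcases eq_or_ne w v with rfl | hw'
  · simpa using hfar u hu huw.symm
  simpa [Function.update_of_ne hu', Function.update_of_ne hw'] using
    hφ u (mem_erase.2 ⟨hu', hu⟩) w (mem_erase.2 ⟨hw', hw⟩) huw

theorem degree_induce_finset (W : Finset V) (v : (W : Set V)) :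
    (G.induce (W : Set V)).degree v = #(G.neighborFinset v ∩ W) := by
  have := congrArg card (map_neighborFinset_induce (G := G) (s := (W : Set V)) v)
  rw [card_map, card_neighborFinset_eq_degree, toFinset_coe] at this
  convert this

theorem exists_nonempty_forall_le_degree_induce_of_not_colorable (h : ¬G.Colorable m) :
    ∃ W : Finset V, W.Nonempty ∧ ∀ v : (W : Set V), m ≤ (G.induce (W : Set V)).degree v := by
  contrapose! h
  refine colorable_of_forall_exists_card_neighborFinset_inter_lt fun W hW ↦ ?_
  obtain ⟨⟨v, hv⟩, hdeg⟩ := h W hW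
  refine ⟨v, hv, ?_⟩
  rwa [degree_induce_finset] at hdeg

end Degeneracy

theorem IsAcyclic.exists_degree_le_one {V : Type*} [Fintype V] [Nonempty V] {G : SimpleGraph V}
    [DecidableRel G.Adj] (hG : G.IsAcyclic) : ∃ v, G.degree v ≤ 1 := by
  -- A neighbour of the start of a longest path lies on it, so by acyclicity it is the next vertex.
  obtain ⟨u, v, p, hp, hmax⟩ := Walk.exists_isPath_forall_isPath_length_le_length G
  have hsnd : ∀ w, G.Adj u w → w = p.snd := fun w huw ↦ by
    refine hG.eq_snd_of_adj_start hp huw (by_contra fun hw ↦ ?_)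
    have := hmax w v (.cons huw.symm p) (hp.cons hw)
    simp at this
  refine ⟨u, ?_⟩
  rw [← card_neighborFinset_eq_degree]
  exact card_le_one.2 fun a ha b hb ↦
    (hsnd a ((mem_neighborFinset _ _ _).1 ha)).trans (hsnd b ((mem_neighborFinset _ _ _).1 hb)).symm

namespace Copy

variable {α β : Type*} {A : SimpleGraph α} {B : SimpleGraph β}

theorem toSubgraph_verts (f : Copy A B) : f.toSubgraph.verts = Set.range f := by
  simp [toSubgraph]

theorem toSubgraph_adj_iff (f : Copy A B) {a b : α} : f.toSubgraph.Adj (f a) (f b) ↔ A.Adj a b := by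
  simp only [toSubgraph, Subgraph.map_adj, Subgraph.top_adj, Relation.Map, coe_toHom]
  constructor
  · rintro ⟨a', b', h, ha, hb⟩
    rwa [← f.injective ha, ← f.injective hb]
  · exact fun h ↦ ⟨a, b, h, rfl, rfl⟩

theorem toSubgraph_eq_iff {f g : Copy A B} :
    g.toSubgraph = f.toSubgraph ↔ ∃ σ : A ≃g A, ⇑g = f ∘ σ := by
  constructor
  · intro h
    have hrange : Set.range g = Set.range f := by rw [← toSubgraph_verts, h, toSubgraph_verts]
    obtain ⟨σ, hσ⟩ := Set.range_subset_range_iff_exists_comp.1 hrange.le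
    obtain ⟨τ, hτ⟩ := Set.range_subset_range_iff_exists_comp.1 hrange.ge
    have hστ : ∀ a, σ (τ a) = a := fun a ↦ f.injective (by
      simpa using (congrFun hσ (τ a)).symm.trans (congrFun hτ a).symm)
    have hτσ : ∀ a, τ (σ a) = a := fun a ↦ g.injective (by
      simpa using (congrFun hτ (σ a)).symm.trans (congrFun hσ a).symm)
    refine ⟨⟨⟨σ, τ, hτσ, hστ⟩, fun {a b} ↦ ?_⟩, hσ⟩
    simp only [Equiv.coe_fn_mk]
    rw [← f.toSubgraph_adj_iff, ← h, ← g.toSubgraph_adj_iff]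
    simp [hσ]
  · rintro ⟨σ, hσ⟩
    ext x y
    · simp only [toSubgraph_verts, hσ, σ.surjective.range_comp]
    · simp only [toSubgraph, Subgraph.map_adj, Subgraph.top_adj, Relation.Map, coe_toHom, hσ,
        Function.comp_apply]
      constructor
      · rintro ⟨a, b, hab, rfl, rfl⟩
        exact ⟨σ a, σ b, σ.map_adj_iff.2 hab, rfl, rfl⟩
      · rintro ⟨a, b, hab, rfl, rfl⟩
        exact ⟨σ.symm a, σ.symm b, σ.symm.map_adj_iff.2 hab, by simp, by simp⟩

end Copy

section Counting

variable {V W α : Type*} {G : SimpleGraph V} {F : SimpleGraph α}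

instance [Finite V] [Finite W] {H : SimpleGraph W} : Finite (G ≃g H) :=
  .of_injective _ DFunLike.coe_injective

theorem labelledCopyCount_eq_card_univ [Fintype V] [Fintype α] [Fintype (Copy F G)] :
    G.labelledCopyCount F = #(univ : Finset (Copy F G)) := by
  rw [labelledCopyCount, card_univ]
  convert rfl

theorem card_filter_toSubgraph_eq [Fintype (Copy F G)] [DecidableEq G.Subgraph] (f : Copy F G) :
    #{g : Copy F G | g.toSubgraph = f.toSubgraph} = Nat.card (F ≃g F) := by
  rw [← Nat.card_eq_finsetCard]
  symm
  refine Nat.card_congr (Equiv.ofBijective (fun σ ↦ ⟨f.comp σ.toCopy, ?_⟩) ⟨fun σ τ h ↦ ?_, ?_⟩)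
  · simpa using Copy.toSubgraph_eq_iff.2 ⟨σ, rfl⟩
  · ext a
    have := congrArg (fun g ↦ (g.1 : Copy F G) a) h
    exact f.injective (by simpa using this)
  · rintro ⟨g, hg⟩
    obtain ⟨σ, hσ⟩ := Copy.toSubgraph_eq_iff.1 (mem_filter.1 hg).2
    exact ⟨σ, Subtype.ext (Copy.ext fun a ↦ by simp [hσ])⟩

theorem labelledCopyCount_eq_copyCount_mul_card_iso [Fintype V] [Fintype α] :
    G.labelledCopyCount F = G.copyCount F * Nat.card (F ≃g F) := by
  classical
  rw [copyCount_eq_card_image_copyToSubgraph, labelledCopyCount_eq_card_univ,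
    card_eq_sum_card_image Copy.toSubgraph univ, ← smul_eq_mul, ← sum_const]
  refine sum_congr rfl fun H hH ↦ ?_
  obtain ⟨f, -, rfl⟩ := mem_image.1 hH
  exact card_filter_toSubgraph_eq f

theorem labelledCopyCount_top [Fintype V] [Fintype α] :
    (⊤ : SimpleGraph V).labelledCopyCount F = (Fintype.card V).descFactorial (Fintype.card α) := by
  classical
  let e : Copy F ⊤ ≃ (α ↪ V) :=
    { toFun := Copy.toEmbedding
      invFun := fun e ↦ ⟨⟨e, fun hab ↦ e.injective.ne hab.ne⟩, e.injective⟩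
      left_inv := fun _ ↦ rfl
      right_inv := fun _ ↦ rfl }
  rw [labelledCopyCount_eq_card_univ, card_univ, Fintype.card_congr e, Fintype.card_embedding_eq]

theorem Copy.labelledCopyCount_le [Fintype V] [Fintype W] [Fintype α] {H : SimpleGraph W}
    (f : Copy G H) : G.labelledCopyCount F ≤ H.labelledCopyCount F := by
  classical
  rw [labelledCopyCount_eq_card_univ, labelledCopyCount_eq_card_univ, card_univ, card_univ]
  exact Fintype.card_le_of_injective (f.comp ·) fun g g' h ↦
    Copy.ext fun a ↦ f.injective (by simpa using congrArg (· a) h)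

section Extend

variable [DecidableEq α] {a : α} (g : Copy (F.induce {a}ᶜ) G) {x : V}

def Copy.extend (hx : x ∉ Set.range g) (hadj : ∀ b (hb : b ≠ a), F.Adj a b → G.Adj x (g ⟨b, hb⟩)) :
    Copy F G where
  toHom :=
    { toFun := fun b ↦ if hb : b = a then x else g ⟨b, hb⟩
      map_rel' := fun {b c} hbc ↦ by
        split_ifs with hb hc hc
        · exact absurd (hb.trans hc.symm) hbc.ne
        · exact hadj c hc (hb ▸ hbc)
        · exact (hadj b hb (hc ▸ hbc.symm)).symm
        · exact g.toHom.map_adj (show (F.induce {a}ᶜ).Adj ⟨b, hb⟩ ⟨c, hc⟩ from hbc) }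
  injective' := fun b c hbc ↦ by
    dsimp only [RelHom.coeFn_mk] at hbc
    split_ifs at hbc with hb hc hc
    · exact hb.trans hc.symm
    · exact absurd ⟨_, hbc.symm⟩ hx
    · exact absurd ⟨_, hbc⟩ hx
    · exact congrArg Subtype.val (g.injective hbc)

variable {g} (hx : x ∉ Set.range g) (hadj : ∀ b (hb : b ≠ a), F.Adj a b → G.Adj x (g ⟨b, hb⟩))

theorem Copy.extend_apply (b : α) :
    g.extend hx hadj b = if hb : b = a then x else g ⟨b, hb⟩ :=
  rfl

@[simp]
theorem Copy.extend_apply_self : g.extend hx hadj a = x := by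
  simp [Copy.extend_apply]

@[simp]
theorem Copy.extend_comp_induce : (g.extend hx hadj).comp (Copy.induce F {a}ᶜ) = g := by
  ext ⟨b, hb⟩
  simp [Copy.extend_apply, Copy.induce, show b ≠ a from hb]

end Extend

section Forest

variable [Fintype V] [DecidableEq V] [DecidableRel G.Adj] {m : ℕ}

theorem Copy.exists_finset_extend [Nonempty V] [Fintype α] [DecidableEq α] [DecidableRel F.Adj]
    (hG : ∀ v, m ≤ G.degree v) {a : α} (ha : F.degree a ≤ 1) (g : Copy (F.induce {a}ᶜ) G) :
    ∃ X : Finset V, m + 1 - Fintype.card ({a}ᶜ : Set α) ≤ #X ∧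
      ∀ x ∈ X, x ∉ Set.range g ∧ ∀ b (hb : b ≠ a), F.Adj a b → G.Adj x (g ⟨b, hb⟩) := by
  set I := univ.image g
  have hI : #I = Fintype.card ({a}ᶜ : Set α) := card_image_of_injective _ g.injective
  have hnotI : ∀ x, x ∉ I → x ∉ Set.range g := fun x hx ⟨b, hb⟩ ↦
    hx (mem_image.2 ⟨b, mem_univ _, hb⟩)
  rcases (F.neighborFinset a).eq_empty_or_nonempty with hnil | ⟨b₀, hb₀⟩
  · obtain ⟨v⟩ := ‹Nonempty V›
    refine ⟨univ \ I, ?_, fun x hx ↦ ⟨hnotI x (mem_sdiff.1 hx).2, fun b _ hab ↦ ?_⟩⟩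
    · have := (hG v).trans_lt (G.degree_lt_card_verts v)
      rw [card_sdiff_of_subset (subset_univ I), card_univ]
      omega
    · simp [← mem_neighborFinset, hnil] at hab
  have hab₀ : F.Adj a b₀ := (mem_neighborFinset _ _ _).1 hb₀
  have hunique : ∀ b, F.Adj a b → b = b₀ := fun b hab ↦ card_le_one.1
    (by rwa [card_neighborFinset_eq_degree]) b ((mem_neighborFinset _ _ _).2 hab) b₀ hb₀
  set y := g ⟨b₀, hab₀.ne'⟩
  have hyI : y ∈ I := mem_image_of_mem g (mem_univ _)
  refine ⟨G.neighborFinset y \ I, ?_, fun x hx ↦ ⟨hnotI x (mem_sdiff.1 hx).2, fun b hb hab ↦ ?_⟩⟩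
  -- `y` is in `I` but is not its own neighbour, so at most `#I - 1` neighbours of `y` are lost.
  · have hsdiff : G.neighborFinset y \ I = G.neighborFinset y \ I.erase y := by
      ext x
      simp only [mem_sdiff, mem_erase, mem_neighborFinset]
      exact ⟨fun h ↦ ⟨h.1, fun h' ↦ h.2 h'.2⟩, fun h ↦ ⟨h.1, fun h' ↦ h.2 ⟨h.1.ne', h'⟩⟩⟩
    have h₁ := le_card_sdiff (I.erase y) (G.neighborFinset y)
    have h₂ := card_erase_add_one hyI
    rw [card_neighborFinset_eq_degree] at h₁
    have := hG y
    rw [hsdiff]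
    omega
  · obtain rfl := hunique b hab
    exact ((mem_neighborFinset _ _ _).1 (mem_sdiff.1 hx).1).symm

theorem labelledCopyCount_induce_compl_mul_le [Nonempty V] [Fintype α] [DecidableEq α]
    [DecidableRel F.Adj] (hG : ∀ v, m ≤ G.degree v) {a : α}
    (ha : F.degree a ≤ 1) :
    G.labelledCopyCount (F.induce {a}ᶜ) * (m + 1 - Fintype.card ({a}ᶜ : Set α)) ≤
      G.labelledCopyCount F := by
  classical
  let restrict : Copy F G → Copy (F.induce {a}ᶜ) G := fun f ↦ f.comp (Copy.induce F {a}ᶜ)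
  rw [labelledCopyCount_eq_card_univ, labelledCopyCount_eq_card_univ,
    card_eq_sum_card_fiberwise (f := restrict) (t := univ) (by simp),
    ← smul_eq_mul, ← sum_const]
  refine sum_le_sum fun g _ ↦ ?_
  obtain ⟨X, hX, hext⟩ := g.exists_finset_extend hG ha
  refine hX.trans ((card_attach (s := X)).symm.trans_le (card_le_card_of_injOn
    (fun x ↦ g.extend (hext x.1 x.2).1 (hext x.1 x.2).2) (fun x _ ↦ ?_) fun x _ y _ hxy ↦ ?_))
  · simp [restrict]
  · simpa using congrArg (· a) hxy

theorem IsAcyclic.descFactorial_le_labelledCopyCount [Nonempty V] (hG : ∀ v, m ≤ G.degree v)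
    [Fintype α] (hF : F.IsAcyclic) :
    (m + 1).descFactorial (Fintype.card α) ≤ G.labelledCopyCount F := by
  obtain ⟨n, hn⟩ : ∃ n, Fintype.card α = n := ⟨_, rfl⟩
  induction n generalizing α with
  | zero =>
    have := Fintype.card_eq_zero_iff.1 hn
    simp
  | succ k ih =>
    classical
    have : Nonempty α := Fintype.card_pos_iff.1 (by omega)
    obtain ⟨a, ha⟩ := hF.exists_degree_le_one
    have hk : Fintype.card ({a}ᶜ : Set α) = k := by
      rw [Fintype.card_compl_set, hn, Set.card_singleton, Nat.add_sub_cancel]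
    calc (m + 1).descFactorial (Fintype.card α)
        = (m + 1 - k) * (m + 1).descFactorial k := by rw [hn, Nat.descFactorial_succ]
      _ ≤ (m + 1 - k) * G.labelledCopyCount (F.induce {a}ᶜ) := by
        gcongr
        exact hk ▸ ih (hF.induce _) hk
      _ ≤ G.labelledCopyCount F := by
        rw [mul_comm, ← hk]
        exact labelledCopyCount_induce_compl_mul_le hG ha

end Forest

end Counting

end SimpleGraph

theorem copyCount_eq_simpleGraphCopyCount {α V : Type*} [Fintype V] (F : SimpleGraph α)
    (G : SimpleGraph V) : copyCount F G = G.copyCount F := by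
  classical
  rw [copyCount, SimpleGraph.copyCount, ← Nat.card_eq_finsetCard]
  exact Nat.card_congr (Equiv.subtypeEquivRight fun H ↦ by
    simpa using ⟨fun ⟨e⟩ ↦ ⟨e.symm⟩, fun ⟨e⟩ ↦ ⟨e.symm⟩⟩)

section Minimizer

variable {α V : Type*} [Fintype α] [Fintype V] {F : SimpleGraph α} {t : ℕ} {G : SimpleGraph V}

theorem IsRamsey.labelledCopyCount_top_ramseyNumber_le (hF : F.IsAcyclic) (ht : 0 < t)
    (hG : IsRamsey t G) :
    (⊤ : SimpleGraph (Fin (ramseyNumber t))).labelledCopyCount F ≤ G.labelledCopyCount F := by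
  classical
  set r := ramseyNumber t
  have hr : 0 < r := ht.trans_le (le_ramseyNumber t)
  have hcol : ¬G.Colorable (r - 1) := fun h ↦ by
    have := hG.ramseyNumber_le_of_colorable h
    omega
  obtain ⟨W, hW, hdeg⟩ := SimpleGraph.exists_nonempty_forall_le_degree_induce_of_not_colorable hcol
  have := hW.coe_sort
  calc (⊤ : SimpleGraph (Fin r)).labelledCopyCount F
      = (r - 1 + 1).descFactorial (Fintype.card α) := by
        rw [SimpleGraph.labelledCopyCount_top, Fintype.card_fin, Nat.sub_add_cancel hr]
    _ ≤ (G.induce (W : Set V)).labelledCopyCount F := hF.descFactorial_le_labelledCopyCount hdeg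
    _ ≤ G.labelledCopyCount F := (SimpleGraph.Copy.induce G W).labelledCopyCount_le

theorem IsRamsey.copyCount_top_ramseyNumber_le (hF : F.IsAcyclic) (ht : 0 < t)
    (hG : IsRamsey t G) :
    copyCount F (⊤ : SimpleGraph (Fin (ramseyNumber t))) ≤ copyCount F G := by
  have h := hG.labelledCopyCount_top_ramseyNumber_le hF ht
  rw [SimpleGraph.labelledCopyCount_eq_copyCount_mul_card_iso,
    SimpleGraph.labelledCopyCount_eq_copyCount_mul_card_iso] at h
  rw [copyCount_eq_simpleGraphCopyCount, copyCount_eq_simpleGraphCopyCount]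
  exact Nat.le_of_mul_le_mul_right h Nat.card_pos

end Minimizer

/-- For every forest `F` and every `t ≥ 2`, the complete graph on `r(K_t)` vertices
minimizes the number of copies of `F` among `K_t`-Ramsey graphs: every `K_t`-Ramsey graph
contains at least as many copies of `F` as `K_{r(K_t)}`, and hence `r_F(K_t)` equals the
number of copies of `F` in `K_{r(K_t)}`. -/
theorem forest_ramsey_minimizer (α : Type) [Fintype α] (F : SimpleGraph α)
    (hF : F.IsAcyclic) (t : ℕ) (ht : 2 ≤ t) :
    (∀ (V : Type) [Fintype V] (G : SimpleGraph V), IsRamsey t G →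
      copyCount F (⊤ : SimpleGraph (Fin (ramseyNumber t))) ≤ copyCount F G) ∧
    sInf {m : ℕ | ∃ (n : ℕ) (G : SimpleGraph (Fin n)), IsRamsey t G ∧ copyCount F G = m}
      = copyCount F (⊤ : SimpleGraph (Fin (ramseyNumber t))) := by
  have hmin {V : Type} [Fintype V] {G : SimpleGraph V} (hG : IsRamsey t G) :=
    hG.copyCount_top_ramseyNumber_le hF (by omega : 0 < t)
  have hmem : _ ∈ {m : ℕ | ∃ (n : ℕ) (G : SimpleGraph (Fin n)), IsRamsey t G ∧ copyCount F G = m} :=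
    ⟨ramseyNumber t, ⊤, isRamsey_ramseyNumber t, rfl⟩
  refine ⟨fun _ _ _ ↦ hmin, le_antisymm (Nat.sInf_le hmem) (le_csInf ⟨_, hmem⟩ ?_)⟩
  rintro _ ⟨n, G, hG, rfl⟩
  exact hmin hG
end

section
/- For all integers 2 ≤ s ≤ t, setting b = binomial(t, 2), we have r_{K_s}(K_t) ≥ m(b)^{s/t} ≥ 2^{s(t-1)/2 - 1}: every graph G that is K_t-Ramsey contains at least m(b)^{s/t} copies of K_s, where m(b) is the minimum number of edges in a b-uniform hypergraph that admits no proper 2-coloring of its vertices. -/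
/-- `m(b)`: the minimum number of edges in a `b`-uniform hypergraph without property B,
i.e. admitting no 2-coloring of its vertices in which no edge is monochromatic. -/
noncomputable def propertyBNumber (b : ℕ) : ℕ :=
  sInf {N : ℕ | ∃ E : Finset (Finset ℕ), (∀ e ∈ E, e.card = b) ∧
    (∀ c : ℕ → Bool, ∃ e ∈ E, ∀ x ∈ e, ∀ y ∈ e, c x = c y) ∧ E.card = N}

open Finset
open scoped Nat FinsetFamily

lemma Nat.choose_succ_pow_le_choose_pow_succ (k r : ℕ) :
    k.choose (r + 1) ^ r ≤ k.choose r ^ (r + 1) := by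
  have hsub : (k - r) ^ r ≤ r ! * k.choose r := by
    rw [← Nat.descFactorial_eq_factorial_mul_choose]
    exact (Nat.pow_le_pow_left (by omega) r).trans (k.pow_sub_le_descFactorial r)
  have hfact : r ! ≤ (r + 1) ^ r :=
    r.factorial_le_pow.trans (Nat.pow_le_pow_left r.le_succ r)
  refine Nat.le_of_mul_le_mul_right (c := (r + 1) ^ r) ?_ (by positivity)
  calc k.choose (r + 1) ^ r * (r + 1) ^ r = (k.choose r * (k - r)) ^ r := by
        rw [← mul_pow, Nat.choose_succ_right_eq]
    _ = k.choose r ^ r * (k - r) ^ r := mul_pow _ _ _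
    _ ≤ k.choose r ^ r * ((r + 1) ^ r * k.choose r) :=
        Nat.mul_le_mul_left _ (hsub.trans (Nat.mul_le_mul_right _ hfact))
    _ = k.choose r ^ (r + 1) * (r + 1) ^ r := by ring

lemma Nat.pow_le_pow_of_forall_succ_pow_le {a : ℕ → ℕ} (ha : ∀ r, a (r + 1) ^ r ≤ a r ^ (r + 1))
    {s t : ℕ} (hs : s ≠ 0) (hst : s ≤ t) : a t ^ s ≤ a s ^ t := by
  induction t, hst using Nat.le_induction with
  | base => rfl
  | succ t hst ih =>
    refine (Nat.pow_le_pow_iff_left (n := t) (by omega)).mp ?_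
    calc (a (t + 1) ^ s) ^ t = (a (t + 1) ^ t) ^ s := by rw [← pow_mul, ← pow_mul, mul_comm]
      _ ≤ (a t ^ (t + 1)) ^ s := Nat.pow_le_pow_left (ha t) s
      _ = (a t ^ s) ^ (t + 1) := by rw [← pow_mul, ← pow_mul, mul_comm]
      _ ≤ (a s ^ t) ^ (t + 1) := Nat.pow_le_pow_left ih _
      _ = (a s ^ (t + 1)) ^ t := by rw [← pow_mul, ← pow_mul, mul_comm]

lemma Nat.choose_pow_le_choose_pow {k s t : ℕ} (hs : s ≠ 0) (hst : s ≤ t) :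
    k.choose t ^ s ≤ k.choose s ^ t :=
  Nat.pow_le_pow_of_forall_succ_pow_le (Nat.choose_succ_pow_le_choose_pow_succ k) hs hst

lemma Nat.factorial_pow_le_factorial_pow {s t : ℕ} (hst : s ≤ t) : s ! ^ t ≤ t ! ^ s := by
  obtain ⟨d, rfl⟩ := Nat.exists_eq_add_of_le hst
  have hfact : s ! ≤ (s + 1) ^ s := s.factorial_le_pow.trans (Nat.pow_le_pow_left s.le_succ s)
  calc s ! ^ (s + d) = s ! ^ s * s ! ^ d := pow_add _ _ _
    _ ≤ s ! ^ s * ((s + 1) ^ s) ^ d := Nat.mul_le_mul_left _ (Nat.pow_le_pow_left hfact d)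
    _ = (s ! * (s + 1) ^ d) ^ s := by rw [mul_pow, ← pow_mul, ← pow_mul, mul_comm s d]
    _ ≤ (s + d)! ^ s := Nat.pow_le_pow_left Nat.factorial_mul_pow_le_factorial s

lemma Nat.choose_succ_le_succ_mul_choose {k t : ℕ} (h : t ≤ k) :
    (k + 1).choose t ≤ (t + 1) * k.choose t := by
  refine Nat.le_of_mul_le_mul_right (c := k + 1 - t) ?_ (by omega)
  rw [← Nat.choose_mul_succ_eq]
  obtain ⟨d, rfl⟩ := Nat.exists_eq_add_of_le h
  rw [show t + d + 1 - t = d + 1 by omega]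
  calc (t + d).choose t * (t + d + 1)
      ≤ (t + d).choose t * (t + d + 1) + (t + d).choose t * t * d := Nat.le_add_right _ _
    _ = (t + 1) * (t + d).choose t * (d + 1) := by ring

lemma Nat.exists_choose_le_le_succ_mul_choose {K n t : ℕ} (hK : K ≠ 0) (htn : t ≤ n)
    (hKn : K ≤ n.choose t) :
    ∃ k, t ≤ k ∧ k ≤ n ∧ k.choose t ≤ K ∧ K ≤ (t + 1) * k.choose t := by
  let P : ℕ → Prop := fun j => j.choose t ≤ K
  have hPt : P t := by simp only [P, Nat.choose_self]; omega
  have htk : t ≤ Nat.findGreatest P n := Nat.le_findGreatest htn hPt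
  refine ⟨_, htk, Nat.findGreatest_le n, Nat.findGreatest_spec htn hPt, ?_⟩
  rcases (Nat.findGreatest_le n : Nat.findGreatest P n ≤ n).eq_or_lt with hkn | hkn
  · rw [hkn]; exact hKn.trans (Nat.le_mul_of_pos_left _ t.succ_pos)
  · have hnext : ¬ P (Nat.findGreatest P n + 1) := Nat.findGreatest_is_greatest (by omega) hkn
    exact (not_le.mp hnext).le.trans (Nat.choose_succ_le_succ_mul_choose htk)

lemma Nat.le_of_forall_pow_le_mul_pow {A B C : ℕ} (h : ∀ p ≠ 0, B ^ p ≤ C * A ^ p) : B ≤ A := by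
  by_contra! hAB
  have hA : A ≠ 0 := by
    rintro rfl
    simpa using (h 1 one_ne_zero).trans_lt' (by simpa using hAB)
  have hratio : (1 : ℝ) < B / A := by
    rw [one_lt_div (by positivity)]; exact_mod_cast hAB
  obtain ⟨p, hp⟩ := pow_unbounded_of_one_lt (C : ℝ) hratio
  have hle : ((B : ℝ) / A) ^ (p + 1) ≤ C := by
    rw [div_pow, div_le_iff₀ (by positivity)]
    exact_mod_cast h (p + 1) p.succ_ne_zero
  exact (hp.trans_le (pow_le_pow_right₀ hratio.le p.le_succ)).not_ge hle

lemma Finset.card_pow_le_mul_card_shadow_iterate_pow {n s t : ℕ} {𝒜 : Finset (Finset (Fin n))}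
    (h𝒜 : (𝒜 : Set (Finset (Fin n))).Sized t) (hs : s ≠ 0) (hst : s ≤ t) :
    #𝒜 ^ s ≤ (t + 1) ^ s * #(∂^[t - s] 𝒜) ^ t := by
  obtain h0 | ⟨A, hA⟩ := 𝒜.eq_empty_or_nonempty
  · simp [h0, hs]
  have htn : t ≤ n := by simpa [h𝒜 hA] using A.card_le_univ
  -- rounding the Lovász parameter down to the integer `k` costs the factor `(t + 1) ^ s`
  obtain ⟨k, htk, hkn, hk𝒜, h𝒜k⟩ := Nat.exists_choose_le_le_succ_mul_choose
    (card_ne_zero_of_mem hA) htn (by simpa using h𝒜.card_le)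
  have hkk : k.choose s ≤ #(∂^[t - s] 𝒜) := by
    simpa [Nat.sub_sub_self hst] using
      kruskal_katona_lovasz_form (Nat.sub_le t s) htk hkn h𝒜 hk𝒜
  calc #𝒜 ^ s ≤ ((t + 1) * k.choose t) ^ s := Nat.pow_le_pow_left h𝒜k s
    _ = (t + 1) ^ s * k.choose t ^ s := mul_pow _ _ _
    _ ≤ (t + 1) ^ s * #(∂^[t - s] 𝒜) ^ t := Nat.mul_le_mul_left _
        ((Nat.choose_pow_le_choose_pow hs hst).trans (Nat.pow_le_pow_left hkk t))

def LacksPropertyB {α : Type*} (E : Finset (Finset α)) : Prop :=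
  ∀ c : α → Bool, ∃ e ∈ E, ∀ x ∈ e, ∀ y ∈ e, c x = c y

lemma lacksPropertyB_powersetCard {α : Type*} {X : Finset α} {b : ℕ} (hX : 2 * b ≤ #X) :
    LacksPropertyB (X.powersetCard b) := by
  intro c
  obtain ⟨col, -, hcol⟩ := exists_le_card_fiber_of_mul_le_card_of_maps_to
    (fun x _ => mem_univ (c x)) univ_nonempty (by simpa using hX)
  obtain ⟨e, he, hcard⟩ := exists_subset_card_eq hcol
  refine ⟨e, mem_powersetCard.mpr ⟨he.trans (filter_subset _ _), hcard⟩, fun x hx y hy => ?_⟩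
  rw [(mem_filter.mp (he hx)).2, (mem_filter.mp (he hy)).2]

lemma propertyBNumber_le_card {α : Type*} [Countable α] {b : ℕ} {E : Finset (Finset α)}
    (hE : (E : Set (Finset α)).Sized b) (hB : LacksPropertyB E) : propertyBNumber b ≤ #E := by
  obtain ⟨f, hf⟩ := Countable.exists_injective_nat α
  let ι : α ↪ ℕ := ⟨f, hf⟩
  rw [← card_map (mapEmbedding ι).toEmbedding]
  refine Nat.sInf_le ⟨_, fun e he => ?_, fun c => ?_, rfl⟩
  · obtain ⟨e', he', rfl⟩ := mem_map.mp he
    simpa using hE he'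
  · obtain ⟨e, he, hmono⟩ := hB (c ∘ f)
    refine ⟨e.map ι, mem_map_of_mem _ he, ?_⟩
    simp only [mem_map]
    rintro _ ⟨x, hx, rfl⟩ _ ⟨y, hy, rfl⟩
    exact hmono x hx y hy

lemma exists_sized_lacksPropertyB_card_eq_propertyBNumber (b : ℕ) :
    ∃ E : Finset (Finset ℕ), (E : Set (Finset ℕ)).Sized b ∧ LacksPropertyB E ∧
      #E = propertyBNumber b := by
  show propertyBNumber b ∈ {N | ∃ E : Finset (Finset ℕ), (E : Set (Finset ℕ)).Sized b ∧
    LacksPropertyB E ∧ #E = N}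
  exact Nat.sInf_mem ⟨_, _, fun _ he => (mem_powersetCard.mp he).2,
    lacksPropertyB_powersetCard (X := range (2 * b)) (by simp), rfl⟩

lemma two_pow_le_two_mul_card_of_lacksPropertyB {α : Type*} [DecidableEq α] {b : ℕ}
    {E : Finset (Finset α)} (hE : (E : Set (Finset α)).Sized b) (hB : LacksPropertyB E) :
    2 ^ b ≤ 2 * #E := by
  set X := E.sup id
  have hsub {e} (he : e ∈ E) : e ⊆ X := le_sup (f := id) he
  have hcover : X.powerset ⊆ E.biUnion fun e => {S ∈ X.powerset | e ⊆ S ∨ Disjoint e S} := by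
    intro S hS
    obtain ⟨e, he, hmono⟩ := hB (· ∈ S)
    refine mem_biUnion.mpr ⟨e, he, mem_filter.mpr ⟨hS, ?_⟩⟩
    by_cases h : ∃ x ∈ e, x ∈ S
    · obtain ⟨x, hx, hxS⟩ := h
      exact Or.inl fun y hy => by simpa [hxS] using hmono y hy x hx
    · push Not at h
      exact Or.inr (disjoint_left.mpr h)
  have hdisj {e} (he : e ∈ E) : #{S ∈ X.powerset | Disjoint e S} = 2 ^ (#X - b) := by
    have : {S ∈ X.powerset | Disjoint e S} = (X \ e).powerset := by
      ext S
      simp only [mem_filter, mem_powerset, subset_sdiff, disjoint_comm]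
    rw [this, card_powerset, card_sdiff_of_subset (hsub he), hE he]
  have hsup {e} (he : e ∈ E) : #{S ∈ X.powerset | e ⊆ S} = 2 ^ (#X - b) := by
    rw [← hdisj he]
    refine card_nbij' (X \ ·) (X \ ·) (fun S hS => ?_) (fun T hT => ?_) (fun S hS => ?_)
      (fun T hT => ?_)
    all_goals simp only [coe_filter, mem_powerset, Set.mem_ofPred_eq] at *
    · exact ⟨sdiff_subset, disjoint_sdiff.mono_left hS.2⟩
    · exact ⟨sdiff_subset, subset_sdiff.mpr ⟨hsub he, hT.2⟩⟩
    · exact Finset.sdiff_sdiff_eq_self hS.1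
    · exact Finset.sdiff_sdiff_eq_self hT.1
  obtain ⟨e₀, he₀⟩ : E.Nonempty := let ⟨e, he, _⟩ := hB fun _ => true; ⟨e, he⟩
  have hbX : b ≤ #X := hE he₀ ▸ card_le_card (hsub he₀)
  have : 2 ^ b * 2 ^ (#X - b) ≤ 2 * #E * 2 ^ (#X - b) := by
    calc 2 ^ b * 2 ^ (#X - b) = #X.powerset := by
          rw [card_powerset, ← pow_add, Nat.add_sub_cancel' hbX]
      _ ≤ ∑ e ∈ E, #{S ∈ X.powerset | e ⊆ S ∨ Disjoint e S} :=
          (card_le_card hcover).trans card_biUnion_le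
      _ ≤ ∑ _e ∈ E, 2 * 2 ^ (#X - b) := sum_le_sum fun e he => by
          rw [filter_or, two_mul]
          exact (card_union_le _ _).trans_eq (by rw [hsup he, hdisj he])
      _ = 2 * #E * 2 ^ (#X - b) := by rw [sum_const, smul_eq_mul]; ring
  exact Nat.le_of_mul_le_mul_right this (by positivity)

namespace SimpleGraph

variable {V : Type*} (G : SimpleGraph V)

lemma shadow_iterate_cliqueFinset_subset [Fintype V] [DecidableEq V] [DecidableRel G.Adj]
    {s t : ℕ} (hst : s ≤ t) : ∂^[t - s] (G.cliqueFinset t) ⊆ G.cliqueFinset s := by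
  intro B hB
  obtain ⟨A, hA, hBA, hcard⟩ := mem_shadow_iterate_iff_exists_mem_card_add.mp hB
  rw [mem_cliqueFinset_iff] at hA ⊢
  refine ⟨hA.isClique.subset (by exact_mod_cast hBA), ?_⟩
  have := hA.card_eq
  omega

lemma card_cliqueFinset_pow_le_mul_pow [Fintype V] [DecidableEq V] [DecidableRel G.Adj]
    {s t : ℕ} (hs : s ≠ 0) (hst : s ≤ t) :
    #(G.cliqueFinset t) ^ s ≤ (t + 1) ^ s * #(G.cliqueFinset s) ^ t := by
  classical
  let e := Fintype.equivFin V
  have hcard (r : ℕ) : #((G.map e).cliqueFinset r) = #(G.cliqueFinset r) := by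
    rw [cliqueFinset_map_of_equiv, card_map]
  rw [← hcard, ← hcard]
  have hsized : ((G.map e).cliqueFinset t : Set (Finset (Fin (Fintype.card V)))).Sized t :=
    fun _ h => (mem_cliqueFinset_iff (G := G.map e)).mp h |>.card_eq
  refine (card_pow_le_mul_card_shadow_iterate_pow hsized hs hst).trans ?_
  gcongr
  exact shadow_iterate_cliqueFinset_subset _ hst

-- The conjunct `f ≠ g` is automatic for `p ≠ 0`; it keeps `tensorPow G 0` loopless.
def tensorPow (p : ℕ) : SimpleGraph (Fin p → V) where
  Adj f g := f ≠ g ∧ ∀ i, G.Adj (f i) (g i)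
  symm := ⟨fun _ _ h => ⟨h.1.symm, fun i => (h.2 i).symm⟩⟩
  loopless := ⟨fun _ h => h.1 rfl⟩

def topHomTensorPowEquiv {p : ℕ} (hp : p ≠ 0) (r : ℕ) :
    ((⊤ : SimpleGraph (Fin r)) →g G.tensorPow p) ≃
      (Fin p → ((⊤ : SimpleGraph (Fin r)) →g G)) where
  toFun F c := ⟨fun j => F j c, fun hij => (F.map_rel hij).2 c⟩
  invFun f := ⟨fun j c => f c j, fun hij =>
    ⟨fun h => ((f ⟨0, Nat.pos_of_ne_zero hp⟩).map_rel hij).ne (congrFun h _),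
      fun c => (f c).map_rel hij⟩⟩
  left_inv _ := rfl
  right_inv _ := rfl

lemma card_topHom_tensorPow {p : ℕ} (hp : p ≠ 0) (r : ℕ) :
    Nat.card ((⊤ : SimpleGraph (Fin r)) →g G.tensorPow p) =
      Nat.card ((⊤ : SimpleGraph (Fin r)) →g G) ^ p := by
  rw [Nat.card_congr (G.topHomTensorPowEquiv hp r), Nat.card_pi, prod_const, card_univ,
    Fintype.card_fin]

lemma card_topHom_eq_factorial_mul [Fintype V] [DecidableEq V] [DecidableRel G.Adj] (r : ℕ) :
    Nat.card ((⊤ : SimpleGraph (Fin r)) →g G) = r ! * #(G.cliqueFinset r) := by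
  let π : ((⊤ : SimpleGraph (Fin r)) →g G) → G.cliqueFinset r := fun f =>
    ⟨univ.image f, mem_cliqueFinset_iff.mpr ⟨by
      simpa using (isClique_range_copy_top ⟨f, f.injective_of_top_hom⟩), by
      rw [card_image_of_injective _ f.injective_of_top_hom, Finset.card_univ, Fintype.card_fin]⟩⟩
  have hfiber (S : G.cliqueFinset r) : {f // π f = S} ≃ (Fin r ≃ S.1) :=
    { toFun f := Equiv.ofBijective
        (fun i => ⟨f.1 i, congrArg Subtype.val f.2 ▸ mem_image_of_mem _ (mem_univ i)⟩)
        ⟨fun i j h => f.1.injective_of_top_hom (congrArg Subtype.val h), fun y => by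
          have hf : univ.image f.1 = S.1 := congrArg Subtype.val f.2
          have hy : (y : V) ∈ univ.image f.1 := by rw [hf]; exact y.2
          obtain ⟨i, -, hi⟩ := mem_image.mp hy
          exact ⟨i, Subtype.ext hi⟩⟩
      invFun e := ⟨⟨fun i => e i, fun hij => (mem_cliqueFinset_iff.mp S.2).1 (e _).2 (e _).2
        (fun h => hij (e.injective (Subtype.ext h)))⟩, Subtype.ext <| by
          ext x
          simp only [π, RelHom.coeFn_mk, mem_image, mem_univ, true_and]
          exact ⟨fun ⟨i, hi⟩ => hi ▸ (e i).2, fun hx => ⟨e.symm ⟨x, hx⟩, by simp⟩⟩⟩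
      left_inv _ := rfl
      right_inv _ := Equiv.ext fun _ => rfl }
  have hcard (S : G.cliqueFinset r) : Nat.card {f // π f = S} = r ! := by
    rw [Nat.card_congr (hfiber S), Nat.card_eq_fintype_card,
      Fintype.card_equiv (S.1.equivFinOfCardEq (mem_cliqueFinset_iff.mp S.2).card_eq).symm,
      Fintype.card_fin]
  rw [← Nat.card_congr (Equiv.sigmaFiberEquiv π), Nat.card_sigma, Finset.sum_congr rfl (fun S _ => hcard S), sum_const, smul_eq_mul, Finset.card_univ,
    Fintype.card_coe, mul_comm]

lemma card_topHom_pow_le_mul_pow [Fintype V] {s t : ℕ} (hs : s ≠ 0) (hst : s ≤ t) :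
    Nat.card ((⊤ : SimpleGraph (Fin t)) →g G) ^ s ≤
      ((t + 1) * t !) ^ s * Nat.card ((⊤ : SimpleGraph (Fin s)) →g G) ^ t := by
  classical
  rw [card_topHom_eq_factorial_mul, card_topHom_eq_factorial_mul]
  calc (t ! * #(G.cliqueFinset t)) ^ s = t ! ^ s * #(G.cliqueFinset t) ^ s := mul_pow _ _ _
    _ ≤ t ! ^ s * ((t + 1) ^ s * #(G.cliqueFinset s) ^ t) :=
        Nat.mul_le_mul_left _ (G.card_cliqueFinset_pow_le_mul_pow hs hst)
    _ ≤ t ! ^ s * ((t + 1) ^ s * (s ! * #(G.cliqueFinset s)) ^ t) := by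
        gcongr
        exact Nat.le_mul_of_pos_left _ s.factorial_pos
    _ = ((t + 1) * t !) ^ s * (s ! * #(G.cliqueFinset s)) ^ t := by rw [mul_pow (t + 1)]; ring

theorem card_cliqueFinset_pow_le [Fintype V] [DecidableEq V] [DecidableRel G.Adj] {s t : ℕ}
    (hs : s ≠ 0) (hst : s ≤ t) : #(G.cliqueFinset t) ^ s ≤ #(G.cliqueFinset s) ^ t := by
  have hhom : Nat.card ((⊤ : SimpleGraph (Fin t)) →g G) ^ s ≤
      Nat.card ((⊤ : SimpleGraph (Fin s)) →g G) ^ t := by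
    refine Nat.le_of_forall_pow_le_mul_pow (C := ((t + 1) * t !) ^ s) fun p hp => ?_
    calc (Nat.card ((⊤ : SimpleGraph (Fin t)) →g G) ^ s) ^ p
        = Nat.card ((⊤ : SimpleGraph (Fin t)) →g G.tensorPow p) ^ s := by
          rw [card_topHom_tensorPow _ hp, ← pow_mul, ← pow_mul, mul_comm]
      _ ≤ ((t + 1) * t !) ^ s * Nat.card ((⊤ : SimpleGraph (Fin s)) →g G.tensorPow p) ^ t :=
          card_topHom_pow_le_mul_pow _ hs hst
      _ = ((t + 1) * t !) ^ s * (Nat.card ((⊤ : SimpleGraph (Fin s)) →g G) ^ t) ^ p := by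
          rw [card_topHom_tensorPow _ hp, ← pow_mul, ← pow_mul, mul_comm p t]
  rw [card_topHom_eq_factorial_mul, card_topHom_eq_factorial_mul, mul_pow, mul_pow] at hhom
  refine Nat.le_of_mul_le_mul_left (hhom.trans ?_) (by positivity : 0 < t ! ^ s)
  exact Nat.mul_le_mul_right _ (Nat.factorial_pow_le_factorial_pow hst)

lemma propertyBNumber_choose_two_le_card_cliqueFinset [Fintype V] [DecidableEq V]
    [DecidableRel G.Adj] {t : ℕ} (hG : IsRamsey t G) :
    propertyBNumber (t.choose 2) ≤ #(G.cliqueFinset t) := by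
  let edges (S : Finset V) : Finset (Sym2 V) := S.offDiag.image Sym2.mk.uncurry
  refine (propertyBNumber_le_card (E := (G.cliqueFinset t).image edges) ?_ ?_).trans
    card_image_le
  · intro e he
    obtain ⟨S, hS, rfl⟩ := mem_image.mp he
    rw [Sym2.card_image_offDiag, (mem_cliqueFinset_iff.mp hS).card_eq]
  · intro c
    obtain ⟨S, col, hcard, hS⟩ := hG c
    have hclique : G.IsNClique t S := ⟨fun u hu v hv huv => (hS u hu v hv huv).1, hcard⟩
    have hcol : ∀ z ∈ edges S, c z = col := by
      simp only [edges, mem_image, mem_offDiag]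
      rintro _ ⟨⟨u, v⟩, ⟨hu, hv, huv⟩, rfl⟩
      exact (hS u hu v hv huv).2
    exact ⟨edges S, mem_image_of_mem _ (mem_cliqueFinset_iff.mpr hclique),
      fun x hx y hy => (hcol x hx).trans (hcol y hy).symm⟩

end SimpleGraph

lemma Real.rpow_div_le_of_pow_le_pow {x y : ℝ} (hx : 0 ≤ x) (hy : 0 ≤ y) {s t : ℕ} (ht : t ≠ 0)
    (h : x ^ s ≤ y ^ t) : x ^ ((s : ℝ) / t) ≤ y :=
  calc x ^ ((s : ℝ) / t) = (x ^ s) ^ ((t : ℝ)⁻¹) := by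
        rw [div_eq_mul_inv, Real.rpow_natCast_mul hx]
    _ ≤ (y ^ t) ^ ((t : ℝ)⁻¹) := by gcongr
    _ = y := Real.pow_rpow_inv_natCast hy ht

lemma two_rpow_le_propertyBNumber_choose_two_rpow {s t : ℕ} (ht : t ≠ 0) (hst : s ≤ t) :
    (2 : ℝ) ^ ((s : ℝ) * ((t : ℝ) - 1) / 2 - 1) ≤
      (propertyBNumber (t.choose 2) : ℝ) ^ ((s : ℝ) / (t : ℝ)) := by
  obtain ⟨E, hE, hB, hcard⟩ := exists_sized_lacksPropertyB_card_eq_propertyBNumber (t.choose 2)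
  have hm : (2 : ℝ) ^ ((t.choose 2 : ℝ) - 1) ≤ propertyBNumber (t.choose 2) := by
    rw [Real.rpow_sub two_pos, Real.rpow_one, Real.rpow_natCast, div_le_iff₀ two_pos, ← hcard,
      mul_comm]
    exact_mod_cast two_pow_le_two_mul_card_of_lacksPropertyB hE hB
  have ht' : (0 : ℝ) < t := by positivity
  have hst' : (s : ℝ) ≤ t := by exact_mod_cast hst
  have hexp : (s : ℝ) * ((t : ℝ) - 1) / 2 - 1 ≤ ((t.choose 2 : ℝ) - 1) * ((s : ℝ) / t) := by
    rw [Nat.cast_choose_two]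
    field_simp
    nlinarith
  calc (2 : ℝ) ^ ((s : ℝ) * ((t : ℝ) - 1) / 2 - 1)
      ≤ (2 : ℝ) ^ (((t.choose 2 : ℝ) - 1) * ((s : ℝ) / t)) :=
        Real.rpow_le_rpow_of_exponent_le one_le_two hexp
    _ = ((2 : ℝ) ^ ((t.choose 2 : ℝ) - 1)) ^ ((s : ℝ) / t) := Real.rpow_mul zero_le_two _ _
    _ ≤ (propertyBNumber (t.choose 2) : ℝ) ^ ((s : ℝ) / (t : ℝ)) := by gcongr

/-- For `2 ≤ s ≤ t` and `b = binomial(t,2)`: every `K_t`-Ramsey graph contains at least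
`m(b)^(s/t)` copies of `K_s` (so `r_{K_s}(K_t) ≥ m(b)^(s/t)`), and moreover
`m(b)^(s/t) ≥ 2^(s(t-1)/2 - 1)`. -/
theorem ramsey_small_clique_count_lower (s t : ℕ) (hs : 2 ≤ s) (hst : s ≤ t) :
    (∀ (V : Type) [Fintype V] (G : SimpleGraph V), IsRamsey t G →
      ((propertyBNumber (t.choose 2) : ℝ) ^ ((s : ℝ) / (t : ℝ)) : ℝ) ≤
        (Nat.card {S : Finset V // G.IsNClique s S} : ℝ)) ∧
    (2 : ℝ) ^ ((s : ℝ) * ((t : ℝ) - 1) / 2 - 1) ≤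
      (propertyBNumber (t.choose 2) : ℝ) ^ ((s : ℝ) / (t : ℝ)) := by
  have ht : t ≠ 0 := by omega
  refine ⟨fun V _ G hG => ?_, two_rpow_le_propertyBNumber_choose_two_rpow ht hst⟩
  classical
  have hcount : Nat.card {S : Finset V // G.IsNClique s S} = #(G.cliqueFinset s) := by
    rw [Nat.card_eq_fintype_card, Fintype.card_subtype]
    rfl
  rw [hcount]
  refine Real.rpow_div_le_of_pow_le_pow (Nat.cast_nonneg _) (Nat.cast_nonneg _) ht ?_
  have hm := G.propertyBNumber_choose_two_le_card_cliqueFinset hG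
  exact_mod_cast (Nat.pow_le_pow_left hm s).trans (G.card_cliqueFinset_pow_le (by omega) hst)
end
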